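/- Let G = (V,E) be a finite simple connected graph that is S4 for monophonic convexity. Then every clique of G is shattered by the family ℋm(G) of monophonic halfspaces: for every clique K ⊆ V and every subset K' ⊆ K there exists a monophonic halfspace H of G with H ∩ K = K'. -/

import Mathlib

open SimpleGraph

variable {V : Type*}

/-- A walk is an induced (chordless) path. -/
def IsInducedPath (G : SimpleGraph V) {x y : V} (p : G.Walk x y) : Prop :=
  p.IsPath ∧ ∀ a b : V, a ∈ p.support → b ∈ p.support → G.Adj a b → s(a, b) ∈ p.edges

/-- The monophonic interval between `u` and `v`: all vertices on some induced
path between `u` and `v` (empty if `u = v`). -/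
def mInterval (G : SimpleGraph V) (u v : V) : Set V :=
  {z | u ≠ v ∧ ∃ p : G.Walk u v, IsInducedPath G p ∧ z ∈ p.support}

/-- Monophonic convexity. -/
def MConvex (G : SimpleGraph V) (C : Set V) : Prop :=
  ∀ x ∈ C, ∀ y ∈ C, mInterval G x y ⊆ C

/-- Monophonic halfspace. -/
def IsMHalfspace (G : SimpleGraph V) (H : Set V) : Prop :=
  MConvex G H ∧ MConvex G Hᶜ

/-- The monophonic shadow `u/v`. -/
def mShadow (G : SimpleGraph V) (u v : V) : Set V :=
  {z | u ∈ mInterval G z v}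

/-- The border `Γ(X)`: vertices of `X` with a neighbour outside `X`. -/
def border (G : SimpleGraph V) (X : Set V) : Set V :=
  {x | x ∈ X ∧ ∃ y, y ∉ X ∧ G.Adj x y}

/-- `△⁻uv = N(u) ∩ N(v)`. -/
def triMinus (G : SimpleGraph V) (u v : V) : Set V :=
  G.neighborSet u ∩ G.neighborSet v

/-- `△uv = (N(u) ∩ N(v)) ∪ {u, v}`. -/
def triangleSet (G : SimpleGraph V) (u v : V) : Set V :=
  (G.neighborSet u ∩ G.neighborSet v) ∪ {u, v}

/-- `□uv`: vertices appearing in some 4-cycle of `G` having `{u,v}` as an edge. -/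
def squareSet (G : SimpleGraph V) (u v : V) : Set V :=
  {x | ∃ a b : V, G.Adj v a ∧ G.Adj a b ∧ G.Adj b u ∧
    a ≠ u ∧ a ≠ v ∧ b ≠ u ∧ b ≠ v ∧ a ≠ b ∧ (x = u ∨ x = v ∨ x = a ∨ x = b)}

/-- `A = □uv \ △⁻uv`. -/
def setA (G : SimpleGraph V) (u v : V) : Set V :=
  squareSet G u v \ triMinus G u v

/-- `Aᵘ = {x ∈ A : d(x,u) < d(x,v)}`. -/
noncomputable def setAu (G : SimpleGraph V) (u v : V) : Set V :=
  {x ∈ setA G u v | G.dist x u < G.dist x v}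

/-- `Aᵛ = A \ Aᵘ`. -/
noncomputable def setAv (G : SimpleGraph V) (u v : V) : Set V :=
  setA G u v \ setAu G u v

/-- The graph obtained from `G` by deleting all edges of the induced subgraph `G[S]`. -/
def delInduced (G : SimpleGraph V) (S : Set V) : SimpleGraph V where
  Adj a b := G.Adj a b ∧ ¬(a ∈ S ∧ b ∈ S)
  symm := by
    refine ⟨fun a b h => ?_⟩
    exact ⟨h.1.symm, fun hc => h.2 ⟨hc.2, hc.1⟩⟩
  loopless := ⟨fun a h => G.ne_of_adj h.1 rfl⟩

/-- The graph `T = G \ E(G[□uv ∪ △⁻uv])`. -/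
def graphT (G : SimpleGraph V) (u v : V) : SimpleGraph V :=
  delInduced G (squareSet G u v ∪ triMinus G u v)

/-- The monophonic convex hull of `X`. -/
def mHull (G : SimpleGraph V) (X : Set V) : Set V :=
  ⋂₀ {C | MConvex G C ∧ X ⊆ C}

/-- `S` is an `(a,b)`-separator: every walk from `a` to `b` meets `S`. -/
def IsSeparator (G : SimpleGraph V) (S : Set V) (a b : V) : Prop :=
  ∀ p : G.Walk a b, ∃ s ∈ S, s ∈ p.support

/-- The cutset `δ(X)` as a set of edges. -/
def cutset (G : SimpleGraph V) (X : Set V) : Set (Sym2 V) :=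
  {e | e ∈ G.edgeSet ∧ ∃ a b : V, e = s(a, b) ∧ a ∈ X ∧ b ∉ X}

/-- A family of sets `ℋ` shatters a set `S`. -/
def Shatters (ℋ : Set (Set V)) (S : Set V) : Prop :=
  ∀ T ⊆ S, ∃ H ∈ ℋ, H ∩ S = T

/-- `G` is `S₄` for monophonic convexity: disjoint m-convex sets are
halfspace separable. -/
def IsS4 (G : SimpleGraph V) : Prop :=
  ∀ C₁ C₂ : Set V, MConvex G C₁ → MConvex G C₂ → Disjoint C₁ C₂ →
    ∃ H : Set V, IsMHalfspace G H ∧ C₁ ⊆ H ∧ C₂ ⊆ Hᶜ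

lemma SimpleGraph.Walk.IsPath.eq_or_eq_of_mem_support_of_mem_edges {G : SimpleGraph V} {x y : V}
    {p : G.Walk x y} (hp : p.IsPath) (he : s(x, y) ∈ p.edges) :
    ∀ z ∈ p.support, z = x ∨ z = y := by
  cases p with
  | nil => simp at he
  | @cons _ w _ hxw q =>
    rw [Walk.edges_cons, List.mem_cons, Sym2.eq_iff] at he
    rcases he with (⟨-, rfl⟩ | ⟨rfl, -⟩) | he
    · obtain rfl : q = Walk.nil := Walk.eq_nil_iff_nil.mpr (Walk.isPath_iff_nil.mp hp.of_cons)
      simp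
    · exact absurd rfl hxw.ne
    · exact absurd (q.fst_mem_support_of_mem_edges he) ((Walk.cons_isPath_iff hxw q).mp hp).2

lemma mInterval_subset_of_adj {G : SimpleGraph V} {x y : V} (hxy : G.Adj x y) :
    mInterval G x y ⊆ {x, y} := by
  rintro z ⟨-, p, ⟨hp, hchordless⟩, hz⟩
  exact hp.eq_or_eq_of_mem_support_of_mem_edges
    (hchordless x y p.start_mem_support p.end_mem_support hxy) z hz

lemma SimpleGraph.IsClique.mConvex {G : SimpleGraph V} {K : Set V} (hK : G.IsClique K) :
    MConvex G K := by
  intro x hx y hy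
  rcases eq_or_ne x y with rfl | hxy
  · exact fun z hz => absurd rfl hz.1
  · exact (mInterval_subset_of_adj (hK hx hy hxy)).trans
      (Set.insert_subset hx (Set.singleton_subset_iff.mpr hy))

theorem cliques_shattered_of_S4_general (G : SimpleGraph V)
    (hS4 : IsS4 G) :
    ∀ K : Set V, G.IsClique K → ∀ K' ⊆ K,
      ∃ H : Set V, IsMHalfspace G H ∧ H ∩ K = K' := by
  intro K hK K' hK'
  obtain ⟨H, hH, hK'H, hrestH⟩ := hS4 K' (K \ K') (hK.subset hK').mConvex
    (hK.subset Set.sdiff_subset).mConvex Set.disjoint_sdiff_right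
  refine ⟨H, hH, Set.Subset.antisymm ?_ (Set.subset_inter hK'H hK')⟩
  rintro z ⟨hzH, hzK⟩
  by_contra hzK'
  exact hrestH ⟨hzK, hzK'⟩ hzH

/-- if `G` is `S₄` for monophonic convexity, then every clique of
`G` is shattered by the monophonic halfspaces. -/
theorem cliques_shattered_of_S4 [Fintype V] (G : SimpleGraph V) (hG : G.Connected)
    (hS4 : IsS4 G) :
    ∀ K : Set V, G.IsClique K → ∀ K' ⊆ K,
      ∃ H : Set V, IsMHalfspace G H ∧ H ∩ K = K' :=
  cliques_shattered_of_S4_general G hS4
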